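/- arXiv:2503.03366 — 7 statements merged into one kernel-verified Lean document; each statement's English description precedes it below -/
import Mathlib

section
/- For any nonzero elements a, b in F = ℝ((t)), the four-dimensional quadratic form ⟨1, a, b, -ab⟩ over F is isotropic. -/
/-!
Modulo squares, every nonzero element of `ℝ((t))` is one of `±1, ±t`: it is `t ^ n` times a
power series whose constant coefficient is `±r²` with `r ≠ 0`, and Hensel's lemma lifts `r` to a
square root. Hence one of `±a`, `±b`, `±ab` is a square (if `±ta` and `±tb` are squares, so is
`±ab`), and each of these six cases gives an explicit zero of `⟨1, a, b, -ab⟩`.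
-/

open PowerSeries
open scoped LaurentSeries

def IsSquareUpToSign {R : Type*} [Mul R] [Neg R] (a : R) : Prop := IsSquare a ∨ IsSquare (-a)

section IsSquareUpToSign

variable {R : Type*}

theorem IsSquareUpToSign.map {S F : Type*} [Ring R] [Ring S] [FunLike F R S] [RingHomClass F R S]
    (f : F) {a : R} (h : IsSquareUpToSign a) : IsSquareUpToSign (f a) :=
  h.imp (IsSquare.map f) fun h' => by simpa using h'.map f

theorem IsSquare.mul_isSquareUpToSign [CommRing R] {a b : R} (ha : IsSquare a)
    (hb : IsSquareUpToSign b) : IsSquareUpToSign (a * b) :=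
  hb.imp ha.mul fun h => by simpa using ha.mul h

theorem IsSquareUpToSign.mul [CommRing R] {a b : R} (ha : IsSquareUpToSign a)
    (hb : IsSquareUpToSign b) : IsSquareUpToSign (a * b) := by
  rcases ha with ha | ha
  · exact ha.mul_isSquareUpToSign hb
  · simpa [IsSquareUpToSign, or_comm] using ha.mul_isSquareUpToSign hb

theorem IsSquareUpToSign.div_isSquare [Field R] {a b : R} (ha : IsSquareUpToSign a)
    (hb : IsSquare b) : IsSquareUpToSign (a / b) :=
  ha.imp (·.div hb) fun h => by simpa [neg_div] using h.div hb

end IsSquareUpToSign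

theorem PowerSeries.isSquare_of_mul_self_eq_constantCoeff {R : Type*} [CommRing R] {f : R⟦X⟧}
    {r : R} (hr : r * r = constantCoeff f) (hu : IsUnit (2 * r)) : IsSquare f := by
  let p : Polynomial R⟦X⟧ := Polynomial.X ^ 2 - Polynomial.C f
  have hp : p.Monic := Polynomial.monic_X_pow_sub_C f two_ne_zero
  have hroot : p.eval (C r) ∈ Ideal.span {X} := by
    simp [p, Ideal.mem_span_singleton, X_dvd_iff, sq, hr]
  have hderiv :
      IsUnit (Ideal.Quotient.mk (Ideal.span {X}) ((Polynomial.derivative p).eval (C r))) := by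
    refine IsUnit.map _ ?_
    simpa [p, isUnit_iff_constantCoeff, one_add_one_eq_two, map_ofNat] using hu
  obtain ⟨s, hs, -⟩ := HenselianRing.is_henselian p hp (C r) hroot hderiv
  exact ⟨s, by simpa [p, sq, sub_eq_zero, eq_comm] using hs⟩

theorem PowerSeries.isSquareUpToSign_of_constantCoeff_ne_zero {f : ℝ⟦X⟧}
    (hf : constantCoeff f ≠ 0) : IsSquareUpToSign f := by
  obtain ⟨r, hr, hr0⟩ : ∃ r : ℝ, r * r = |constantCoeff f| ∧ r ≠ 0 :=
    ⟨_, Real.mul_self_sqrt (abs_nonneg _), by simpa using hf⟩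
  have hu : IsUnit (2 * r) := by simpa using hr0
  rcases abs_choice (constantCoeff f) with habs | habs <;> rw [habs] at hr
  · exact .inl (isSquare_of_mul_self_eq_constantCoeff hr hu)
  · exact .inr (isSquare_of_mul_self_eq_constantCoeff (by simpa using hr) hu)

open HahnSeries in
theorem LaurentSeries.isSquare_single_or_isSquare_single_one_mul_single {K : Type*}
    [CommSemiring K] (n : ℤ) :
    IsSquare (single n 1 : K⸨X⸩) ∨ IsSquare (single 1 1 * single n 1 : K⸨X⸩) := by
  rcases Int.even_or_odd' n with ⟨k, rfl | rfl⟩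
  · exact .inl ⟨single k 1, by rw [single_mul_single, two_mul, mul_one]⟩
  · refine .inr ⟨single (k + 1) 1, ?_⟩
    rw [single_mul_single, single_mul_single, mul_one]
    ring_nf

open HahnSeries in
theorem LaurentSeries.isSquareUpToSign_or_isSquareUpToSign_single_one_mul {a : ℝ⸨X⸩}
    (ha : a ≠ 0) : IsSquareUpToSign a ∨ IsSquareUpToSign (single 1 1 * a) := by
  have hc : constantCoeff a.powerSeriesPart ≠ 0 := by
    simpa [← coeff_zero_eq_constantCoeff] using coeff_order_eq_zero.not.mpr ha
  have hP : IsSquareUpToSign (a.powerSeriesPart : ℝ⸨X⸩) :=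
    (isSquareUpToSign_of_constantCoeff_ne_zero hc).map (ofPowerSeries ℤ ℝ)
  rw [← a.single_order_mul_powerSeriesPart, ← mul_assoc]
  exact (isSquare_single_or_isSquare_single_one_mul_single a.order).imp
    (·.mul_isSquareUpToSign hP) (·.mul_isSquareUpToSign hP)

theorem exists_isotropic_of_isSquareUpToSign {R : Type*} [CommRing R] [Nontrivial R] {a b : R}
    (hb : b ≠ 0)
    (h : IsSquareUpToSign a ∨ IsSquareUpToSign b ∨ IsSquareUpToSign (a * b)) :
    ∃ x y z w : R, ¬(x = 0 ∧ y = 0 ∧ z = 0 ∧ w = 0) ∧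
      x ^ 2 + a * y ^ 2 + b * z ^ 2 - a * b * w ^ 2 = 0 := by
  rcases h with (⟨s, hs⟩ | ⟨s, hs⟩) | (⟨s, hs⟩ | ⟨s, hs⟩) | (⟨s, hs⟩ | ⟨s, hs⟩)
  · exact ⟨0, 0, s, 1, by simp, by rw [hs]; ring⟩
  · exact ⟨s, 1, 0, 0, by simp, by linear_combination -hs⟩
  · exact ⟨0, s, 0, 1, by simp, by rw [hs]; ring⟩
  · exact ⟨s, 0, 1, 0, by simp, by linear_combination -hs⟩
  · exact ⟨s, 0, 0, 1, by simp, by linear_combination -hs⟩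
  · exact ⟨0, b, s, 0, by simp [hb], by linear_combination -b * hs⟩

/-- For any nonzero `a, b` in `F = ℝ((t))`, the quadratic form `⟨1, a, b, -ab⟩`
is isotropic over `F`: it has a nontrivial zero. -/
theorem laurentSeries_real_pfister_neighbor_isotropic
    (a b : LaurentSeries ℝ) (ha : a ≠ 0) (hb : b ≠ 0) :
    ∃ x y z w : LaurentSeries ℝ, ¬(x = 0 ∧ y = 0 ∧ z = 0 ∧ w = 0) ∧
      x ^ 2 + a * y ^ 2 + b * z ^ 2 - a * b * w ^ 2 = 0 := by
  refine exists_isotropic_of_isSquareUpToSign hb ?_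
  set t : ℝ⸨X⸩ := HahnSeries.single 1 1
  rcases LaurentSeries.isSquareUpToSign_or_isSquareUpToSign_single_one_mul ha with hA | hA
  · exact .inl hA
  rcases LaurentSeries.isSquareUpToSign_or_isSquareUpToSign_single_one_mul hb with hB | hB
  · exact .inr (.inl hB)
  have ht : t ≠ 0 := HahnSeries.single_ne_zero one_ne_zero
  have hab : t * a * (t * b) / (t * t) = a * b := by field_simp
  exact .inr (.inr (hab ▸ (hA.mul hB).div_isSquare ⟨t, rfl⟩))
end

section
/- If F is a formally real Pythagorean field, then the field of formal Laurent series F((t)) is also formally real and Pythagorean. -/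
/-! Because `F` is formally real, the leading terms of two sums of squares in `F((t))` never
cancel, so every sum of squares has even order and a leading coefficient that is a sum of squares
in `F`; for `-1` this contradicts the formal reality of `F`. Conversely, a sum of squares of order
`2n` with leading coefficient `d²` (using that `F` is Pythagorean) is `t²ⁿ u` for a power series
`u` with constant coefficient `d²`, and Hensel's lemma for `X² - u` gives `u` a square root, as
`2 ≠ 0` in `F`. -/

open HahnSeries

theorem IsFormallyReal.of_not_isSumSq_neg_one {F : Type*} [Field F] (hF : ¬ IsSumSq (-1 : F)) :
    IsFormallyReal F := by
  refine IsFormallyReal.of_eq_zero_of_eq_zero_of_mul_self_add fun {s a} hs hsum => ?_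
  by_contra ha
  apply hF
  have : s * (a⁻¹ * a⁻¹) = -1 := by
    rw [eq_neg_of_add_eq_zero_right hsum]
    field_simp
  exact this ▸ hs.mul (IsSumSq.mul_self a⁻¹)

theorem PowerSeries.isSquare_of_constantCoeff_eq_mul_self {R : Type*} [CommRing R]
    (h2 : IsUnit (2 : R)) {f : PowerSeries R} {a : R} (ha : IsUnit a)
    (hf : constantCoeff f = a * a) : IsSquare f := by
  obtain ⟨q, hq, -⟩ := HenselianRing.is_henselian (I := Ideal.span {X})
    (Polynomial.X ^ 2 - Polynomial.C f) (Polynomial.monic_X_pow_sub_C f two_ne_zero) (C a)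
    (by
      rw [Ideal.mem_span_singleton, X_dvd_iff]
      simp [hf, sq])
    (by
      have : (Polynomial.X ^ 2 - Polynomial.C f).derivative.eval (C a) = C 2 * C a := by
        simp [one_add_one_eq_two, map_ofNat]
      rw [this]
      exact ((h2.map C).mul (ha.map C)).map _)
  refine ⟨q, ?_⟩
  simpa [sub_eq_zero, sq, eq_comm] using hq

namespace HahnSeries

theorem order_add_eq_left_of_coeff_ne_zero {Γ R : Type*} [Zero Γ] [LinearOrder Γ] [AddMonoid R]
    {x y : R⟦Γ⟧} (hxy : x.order ≤ y.order) (h : (x + y).coeff x.order ≠ 0) :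
    (x + y).order = x.order :=
  le_antisymm (order_le_of_coeff_ne_zero h)
    (by simpa [hxy] using min_order_le_order_add (ne_zero_of_coeff_ne_zero h))

variable {Γ R : Type*} [AddCommMonoid Γ] [LinearOrder Γ]

def HasSumSqLeadingTerm [Semiring R] (x : R⟦Γ⟧) : Prop :=
  Even x.order ∧ IsSumSq x.leadingCoeff

theorem hasSumSqLeadingTerm_mul_self [IsOrderedCancelAddMonoid Γ] [Semiring R] [NoZeroDivisors R]
    (x : R⟦Γ⟧) : HasSumSqLeadingTerm (x * x) := by
  obtain rfl | hx := eq_or_ne x 0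
  · simp [HasSumSqLeadingTerm]
  exact ⟨⟨x.order, order_mul hx hx⟩, leadingCoeff_mul x x ▸ IsSumSq.mul_self _⟩

theorem HasSumSqLeadingTerm.add [Semiring R] [IsFormallyReal R] {x y : R⟦Γ⟧}
    (hx : HasSumSqLeadingTerm x) (hy : HasSumSqLeadingTerm y) : HasSumSqLeadingTerm (x + y) := by
  wlog hle : x.order ≤ y.order generalizing x y
  · rw [add_comm]
    exact this hy hx (le_of_not_ge hle)
  obtain rfl | hx0 := eq_or_ne x 0
  · simpa using hy
  obtain rfl | hy0 := eq_or_ne y 0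
  · simpa using hx
  have hlcx : x.leadingCoeff ≠ 0 := leadingCoeff_ne_zero.2 hx0
  have hcoeff : (x + y).coeff x.order ≠ 0 ∧ IsSumSq ((x + y).coeff x.order) := by
    rw [coeff_add, ← leadingCoeff_eq]
    obtain hlt | heq := hle.lt_or_eq
    · rw [coeff_eq_zero_of_lt_order hlt, add_zero]
      exact ⟨hlcx, hx.2⟩
    · rw [heq, ← leadingCoeff_eq]
      exact ⟨fun h => hlcx (IsFormallyReal.eq_zero_of_add_right hx.2 hy.2 h), hx.2.add hy.2⟩
  have hord := order_add_eq_left_of_coeff_ne_zero hle hcoeff.1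
  exact ⟨hord ▸ hx.1, by rw [leadingCoeff_eq, hord]; exact hcoeff.2⟩

theorem HasSumSqLeadingTerm.of_isSumSq [IsOrderedCancelAddMonoid Γ] [Semiring R]
    [NoZeroDivisors R] [IsFormallyReal R] {x : R⟦Γ⟧} (hx : IsSumSq x) :
    HasSumSqLeadingTerm x := by
  induction hx with
  | zero => simp [HasSumSqLeadingTerm]
  | sq_add a _ ih => exact (hasSumSqLeadingTerm_mul_self a).add ih

end HahnSeries

theorem LaurentSeries.isSquare_of_even_order_of_isSquare_leadingCoeff {F : Type*} [Field F]
    (h2 : (2 : F) ≠ 0) {x : LaurentSeries F} (hord : Even x.order)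
    (hlc : IsSquare x.leadingCoeff) : IsSquare x := by
  obtain rfl | hx := eq_or_ne x 0
  · exact ⟨0, by simp⟩
  obtain ⟨n, hn⟩ := hord
  obtain ⟨d, hd⟩ := hlc
  have hd0 : d ≠ 0 := by rintro rfl; simp_all
  have hconst : PowerSeries.constantCoeff x.powerSeriesPart = d * d := by
    rw [← PowerSeries.coeff_zero_eq_constantCoeff_apply, powerSeriesPart_coeff, Nat.cast_zero,
      add_zero, ← leadingCoeff_eq, hd]
  obtain ⟨q, hq⟩ := PowerSeries.isSquare_of_constantCoeff_eq_mul_self (isUnit_iff_ne_zero.2 h2)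
    (isUnit_iff_ne_zero.2 hd0) hconst
  refine ⟨single n 1 * ofPowerSeries ℤ F q, ?_⟩
  have hsingle : single (n + n) (1 : F) = single n 1 * single n 1 := by
    rw [single_mul_single, mul_one]
  rw [← x.single_order_mul_powerSeriesPart, hq, hn, map_mul, hsingle]
  ring

/-- If `F` is a formally real Pythagorean field, then the Laurent series field
`F((t))` is also formally real and Pythagorean. -/
theorem laurentSeries_formallyReal_pythagorean (F : Type*) [Field F]
    (hFR : ¬ IsSumSq (-1 : F)) (hPy : ∀ x : F, IsSumSq x → IsSquare x) :
    ¬ IsSumSq (-1 : LaurentSeries F) ∧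
      ∀ x : LaurentSeries F, IsSumSq x → IsSquare x := by
  have : IsSemireal F := .of_not_isSumSq_neg_one hFR
  have : IsFormallyReal F := .of_not_isSumSq_neg_one hFR
  refine ⟨fun h => hFR ?_, fun x hx => ?_⟩
  · simpa [leadingCoeff_neg] using (HasSumSqLeadingTerm.of_isSumSq h).2
  · obtain ⟨hord, hlc⟩ := HasSumSqLeadingTerm.of_isSumSq hx
    exact LaurentSeries.isSquare_of_even_order_of_isSquare_leadingCoeff two_ne_zero hord
      (hPy _ hlc)
end

section
/- Let (A, σ) be a central simple algebra with orthogonal involution over a formally real field F such that σ is strongly anisotropic. Then there exists an algebraic field extension K/F such that K is formally real and Pythagorean, σ_K is strongly anisotropic, and for every proper algebraic extension L/K the involution σ_L is weakly isotropic. -/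
/-!
By Zorn's lemma there is an intermediate field `K` of `F̄/F` that is maximal among those over
which `σ` stays strongly anisotropic: the base change to the union of a chain is anisotropic
because any finitely many tensors already live over one member of the chain. Over such a `K`,
`σ_K` is weakly isotropic over every larger `L` by maximality, and `K` is formally real because
`1 + ∑ cᵢ² = 0` would make `σ(1)·1 + ∑ σ(cᵢ)cᵢ` vanish. `K` is Pythagorean by the
Lewis–Scheiderer–Unger argument: if a sum of squares `x = ∑ cⱼ²` were not a square, then every
`z ∈ A ⊗ K(√x)` is `p + √x q` with `p, q ∈ A ⊗ K`, and the `1`-component of `∑ σ(z)z` is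
`∑ σ(p)p + ∑ⱼ σ(cⱼ q)(cⱼ q)`, so `σ` would remain strongly anisotropic over `K(√x) ⊋ K`.
-/

open TensorProduct

section Anisotropy

variable {R S : Type*} [Semiring R] [Semiring S]

def IsStronglyAnisotropic (τ : R → R) : Prop :=
  ∀ n : ℕ, 0 < n → ∀ x : Fin n → R, (∀ i, x i ≠ 0) → ∑ i, τ (x i) * x i ≠ 0

theorem IsStronglyAnisotropic.eq_zero_of_sum_eq_zero {τ : R → R} (h : IsStronglyAnisotropic τ)
    {ι : Type*} [Fintype ι] {v : ι → R} (hv : ∑ i, τ (v i) * v i = 0) (i : ι) : v i = 0 := by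
  classical
  by_contra hi
  let e := Fintype.equivFin {j // v j ≠ 0}
  refine h _ (Fintype.card_pos_iff.2 ⟨⟨i, hi⟩⟩) (fun k => v (e.symm k)) (fun k => (e.symm k).2) ?_
  rw [e.symm.sum_comp (fun j => τ (v j) * v j),
    ← Finset.sum_subtype (Finset.univ.filter fun j => v j ≠ 0) (by simp) (fun j => τ (v j) * v j),
    Finset.sum_filter_of_ne (p := fun j => v j ≠ 0) fun j _ hj hvj => hj (by rw [hvj, mul_zero]),
    hv]

theorem IsStronglyAnisotropic.of_injective {τ : R → R} {τ' : S → S} (φ : R →+* S)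
    (hφ : Function.Injective φ) (hcomm : ∀ x, φ (τ x) = τ' (φ x))
    (h : IsStronglyAnisotropic τ') : IsStronglyAnisotropic τ := by
  intro n hn x hx hsum
  refine h n hn (φ ∘ x) (fun i => (map_ne_zero_iff φ hφ).2 (hx i)) ?_
  simp [← hcomm, ← map_mul, ← map_sum, hsum]

end Anisotropy

theorem map_one_of_antimul_of_involutive {A : Type*} [Monoid A] {σ : A → A}
    (hanti : ∀ x y, σ (x * y) = σ y * σ x) (hinv : ∀ x, σ (σ x) = x) : σ 1 = 1 :=
  calc σ 1 = σ 1 * σ (σ 1) := by rw [hinv, mul_one]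
    _ = σ (σ 1 * 1) := (hanti _ _).symm
    _ = 1 := by rw [mul_one, hinv]

theorem IsSumSq.exists_eq_sum_mul_self {R : Type*} [AddCommMonoid R] [Mul R] {x : R}
    (h : IsSumSq x) : ∃ (n : ℕ) (c : Fin n → R), x = ∑ j, c j * c j := by
  induction h with
  | zero => exact ⟨0, ![], by simp⟩
  | sq_add a _ ih =>
    obtain ⟨n, c, rfl⟩ := ih
    exact ⟨n + 1, Fin.cons a c, by simp [Fin.sum_univ_succ]⟩

theorem Commute.add_mul_mul_add_eq {S : Type*} [Semiring S] {ρ : S} (hρ : ∀ y, Commute ρ y)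
    (a b P Q : S) :
    (a + b * ρ) * (P + ρ * Q) = (a * P + ρ * ρ * (b * Q)) + ρ * (a * Q + b * P) := by
  rw [← (hρ b).eq]
  simp only [mul_add, add_mul, mul_assoc, ← (hρ a).left_comm, ← (hρ b).left_comm]
  abel

theorem eq_zero_of_mul_self_eq_mul_self_mul {K : Type*} [Field K] {x : K} (hx : ¬ IsSquare x)
    {s t : K} (h : s * s = t * t * x) : s = 0 ∧ t = 0 := by
  by_cases ht : t = 0
  · subst ht
    exact ⟨mul_self_eq_zero.1 (by simpa using h), rfl⟩
  · exact absurd ⟨s / t, by field_simp; linear_combination -h⟩ hx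

section BaseChange

variable {F A K L : Type*} [CommSemiring F] [Semiring A] [Algebra F A]
  [CommSemiring K] [Algebra F K] [CommSemiring L] [Algebra F L] {σ : A →ₗ[F] A}

theorem rTensor_mul_of_antimul (hanti : ∀ x y, σ (x * y) = σ y * σ x) (u v : A ⊗[F] K) :
    σ.rTensor K (u * v) = σ.rTensor K v * σ.rTensor K u := by
  induction u using TensorProduct.induction_on with
  | zero => simp
  | add u₁ u₂ h₁ h₂ => simp [mul_add, add_mul, h₁, h₂]
  | tmul a c =>
    induction v using TensorProduct.induction_on with
    | zero => simp
    | add v₁ v₂ h₁ h₂ => simp [mul_add, add_mul, h₁, h₂]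
    | tmul b d => simp [hanti, mul_comm c d]

theorem rTensor_one_tmul (hσ1 : σ 1 = 1) (c : K) : σ.rTensor K (1 ⊗ₜ c) = 1 ⊗ₜ c := by
  simp [hσ1]

theorem rTensor_one (hσ1 : σ 1 = 1) : σ.rTensor K 1 = 1 :=
  rTensor_one_tmul hσ1 1

theorem commute_one_tmul (c : K) (w : A ⊗[F] K) : Commute (1 ⊗ₜ[F] c) w := by
  induction w using TensorProduct.induction_on with
  | zero => exact Commute.zero_right _
  | add w₁ w₂ h₁ h₂ => exact h₁.add_right h₂
  | tmul a d => exact (Commute.one_left a).tmul (Commute.all c d)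

theorem lTensor_rTensor_comm (g : K →ₐ[F] L) (z : A ⊗[F] K) :
    Algebra.TensorProduct.lTensor (S := F) A g (σ.rTensor K z) =
      σ.rTensor L (Algebra.TensorProduct.lTensor (S := F) A g z) := by
  induction z using TensorProduct.induction_on with
  | zero => simp
  | add z₁ z₂ h₁ h₂ => simp [h₁, h₂]
  | tmul a c => simp

theorem sum_rTensor_one_tmul_mul (hanti : ∀ x y, σ (x * y) = σ y * σ x) (hσ1 : σ 1 = 1)
    {n : ℕ} (c : Fin n → K) (w : A ⊗[F] K) :
    ∑ j, σ.rTensor K ((1 ⊗ₜ c j) * w) * ((1 ⊗ₜ c j) * w) =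
      (1 ⊗ₜ ∑ j, c j * c j) * (σ.rTensor K w * w) := by
  rw [TensorProduct.tmul_sum, Finset.sum_mul]
  refine Finset.sum_congr rfl fun j _ => ?_
  rw [rTensor_mul_of_antimul hanti, rTensor_one_tmul hσ1, ← (commute_one_tmul _ _).eq, mul_assoc,
    (commute_one_tmul (c j) (σ.rTensor K w)).symm.left_comm, ← mul_assoc,
    Algebra.TensorProduct.tmul_mul_tmul, one_mul]

end BaseChange

theorem lTensor_injective {F A K L : Type*} [Field F] [Ring A] [Algebra F A]
    [CommRing K] [Algebra F K] [CommRing L] [Algebra F L] {g : K →ₐ[F] L}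
    (hg : Function.Injective g) :
    Function.Injective (Algebra.TensorProduct.lTensor (S := F) A g) :=
  Module.Flat.lTensor_preserves_injective_linearMap g.toLinearMap hg

theorem not_isSumSq_neg_one_of_isStronglyAnisotropic {F A K : Type*} [CommRing F] [Ring A]
    [Algebra F A] [CommRing K] [Algebra F K] [Nontrivial (A ⊗[F] K)] {σ : A →ₗ[F] A}
    (hanti : ∀ x y, σ (x * y) = σ y * σ x) (hσ1 : σ 1 = 1)
    (h : IsStronglyAnisotropic (σ.rTensor K)) : ¬ IsSumSq (-1 : K) := by
  intro hneg
  obtain ⟨s, c, hc⟩ := hneg.exists_eq_sum_mul_self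
  have hsq := sum_rTensor_one_tmul_mul hanti hσ1 c 1
  rw [← hc, rTensor_one hσ1] at hsq
  refine one_ne_zero (h.eq_zero_of_sum_eq_zero
    (v := Fin.cons 1 fun j => (1 ⊗ₜ[F] c j * 1 : A ⊗[F] K)) ?_ 0)
  rw [Fin.sum_univ_succ]
  simp only [Fin.cons_zero, Fin.cons_succ, hsq]
  rw [rTensor_one hσ1, mul_one, mul_one, TensorProduct.tmul_neg, ← Algebra.TensorProduct.one_def,
    add_neg_cancel]

section Descent

variable {F A : Type*} [Field F] [Ring A] [Algebra F A] {σ : A →ₗ[F] A}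

theorem IsStronglyAnisotropic.rTensor_of_injective {K L : Type*} [CommRing K] [Algebra F K]
    [CommRing L] [Algebra F L] {g : K →ₐ[F] L} (hg : Function.Injective g)
    (h : IsStronglyAnisotropic (σ.rTensor L)) : IsStronglyAnisotropic (σ.rTensor K) :=
  h.of_injective (Algebra.TensorProduct.lTensor (S := F) A g).toRingHom (lTensor_injective hg)
    (lTensor_rTensor_comm g)

theorem IsStronglyAnisotropic.rTensor_self (h : IsStronglyAnisotropic σ) :
    IsStronglyAnisotropic (σ.rTensor F) :=
  h.of_injective (Algebra.TensorProduct.rid F F A).toRingHom (AlgEquiv.injective _) fun z => by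
    induction z using TensorProduct.induction_on with
    | zero => simp
    | add z₁ z₂ h₁ h₂ => simp_all
    | tmul a c => simp

theorem IsStronglyAnisotropic.rTensor_bot {E : Type*} [Field E] [Algebra F E]
    (h : IsStronglyAnisotropic σ) :
    IsStronglyAnisotropic (σ.rTensor ↥(⊥ : IntermediateField F E)) :=
  h.rTensor_self.rTensor_of_injective (g := (IntermediateField.botEquiv F E).toAlgHom)
    (IntermediateField.botEquiv F E).injective

end Descent

section QuadraticExtension

variable {F A K L : Type*} [CommRing F] [Ring A] [Algebra F A]
  [Field K] [Algebra F K] [CommRing L] [Algebra F L] {σ : A →ₗ[F] A}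

/-- The splitting of `A ⊗ L` induced by `L = g(K) ⊕ g(K)·r`; see `tensorDecomp_apply`. -/
noncomputable def tensorDecomp (g : K →ₐ[F] L) (r : L)
    (hbij : Function.Bijective fun st : K × K => g st.1 + g st.2 * r) :
    ((A ⊗[F] K) × (A ⊗[F] K)) ≃ₗ[F] A ⊗[F] L :=
  (TensorProduct.prodRight F F A K K).symm ≪≫ₗ
    (LinearEquiv.ofBijective (g.toLinearMap.coprod (LinearMap.mulRight F r ∘ₗ g.toLinearMap))
      hbij).lTensor A

theorem tensorDecomp_apply (g : K →ₐ[F] L) (r : L)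
    (hbij : Function.Bijective fun st : K × K => g st.1 + g st.2 * r)
    (pq : (A ⊗[F] K) × (A ⊗[F] K)) :
    tensorDecomp g r hbij pq =
      Algebra.TensorProduct.lTensor (S := F) A g pq.1 +
        (1 ⊗ₜ r) * Algebra.TensorProduct.lTensor (S := F) A g pq.2 := by
  obtain ⟨w, rfl⟩ := (TensorProduct.prodRight F F A K K).surjective pq
  induction w using TensorProduct.induction_on with
  | zero => simp
  | add w₁ w₂ h₁ h₂ => simp only [map_add, Prod.fst_add, Prod.snd_add, h₁, h₂, mul_add]; abel
  | tmul a st =>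
    simp [tensorDecomp, ← TensorProduct.tmul_add, mul_comm r]
    rfl

theorem rTensor_tensorDecomp_mul_self (hanti : ∀ x y, σ (x * y) = σ y * σ x) (hσ1 : σ 1 = 1)
    {g : K →ₐ[F] L} {r : L} {x : K} (hr : r * r = g x)
    (hbij : Function.Bijective fun st : K × K => g st.1 + g st.2 * r) (p q : A ⊗[F] K) :
    σ.rTensor L (tensorDecomp g r hbij (p, q)) * tensorDecomp g r hbij (p, q) =
      tensorDecomp g r hbij
        (σ.rTensor K p * p + (1 ⊗ₜ x) * (σ.rTensor K q * q),
          σ.rTensor K p * q + σ.rTensor K q * p) := by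
  have hρρ : Algebra.TensorProduct.lTensor (S := F) A g (1 ⊗ₜ x) = (1 ⊗ₜ r) * (1 ⊗ₜ r) := by
    simp [hr]
  simp only [tensorDecomp_apply, map_add, map_mul, lTensor_rTensor_comm, hρρ]
  rw [rTensor_mul_of_antimul hanti, rTensor_one_tmul hσ1]
  exact Commute.add_mul_mul_add_eq (commute_one_tmul r) _ _ _ _

theorem IsStronglyAnisotropic.rTensor_of_mul_self_eq (hanti : ∀ x y, σ (x * y) = σ y * σ x)
    (hσ1 : σ 1 = 1) {g : K →ₐ[F] L} {r : L} {x : K} (hx : IsSumSq x) (hx0 : x ≠ 0)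
    (hr : r * r = g x) (hbij : Function.Bijective fun st : K × K => g st.1 + g st.2 * r)
    (hK : IsStronglyAnisotropic (σ.rTensor K)) : IsStronglyAnisotropic (σ.rTensor L) := by
  intro n hn z hz hsum
  set D := tensorDecomp (A := A) g r hbij
  set p := fun m => (D.symm (z m)).1
  set q := fun m => (D.symm (z m)).2
  have hzpq : ∀ m, z m = D (p m, q m) := fun m => (D.apply_symm_apply (z m)).symm
  have hfst : ∑ m, (σ.rTensor K (p m) * p m + (1 ⊗ₜ x) * (σ.rTensor K (q m) * q m)) = 0 := by
    have hmul : ∀ m, σ.rTensor L (z m) * z m = D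
        (σ.rTensor K (p m) * p m + (1 ⊗ₜ x) * (σ.rTensor K (q m) * q m),
          σ.rTensor K (p m) * q m + σ.rTensor K (q m) * p m) := fun m => by
      rw [hzpq]
      exact rTensor_tensorDecomp_mul_self hanti hσ1 hr hbij _ _
    rw [Finset.sum_congr rfl fun m _ => hmul m, ← map_sum, D.map_eq_zero_iff] at hsum
    simpa [Prod.fst_sum] using congrArg Prod.fst hsum
  obtain ⟨s, c, rfl⟩ := hx.exists_eq_sum_mul_self
  have hv := hK.eq_zero_of_sum_eq_zero
    (v := Sum.elim p fun mj : Fin n × Fin s => (1 ⊗ₜ c mj.2) * q mj.1) (by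
      rw [Fintype.sum_sum_type, Fintype.sum_prod_type]
      simpa only [Sum.elim_inl, Sum.elim_inr, sum_rTensor_one_tmul_mul hanti hσ1,
        ← Finset.sum_add_distrib] using hfst)
  obtain ⟨j, hj⟩ : ∃ j, c j ≠ 0 := by
    by_contra! h
    exact hx0 (by simp [h])
  have hp : p ⟨0, hn⟩ = 0 := hv (.inl _)
  have hq : q ⟨0, hn⟩ = 0 :=
    ((hj.isUnit.map Algebra.TensorProduct.includeRight).mul_right_eq_zero).1 (hv (.inr (_, j)))
  exact hz ⟨0, hn⟩ (by rw [hzpq, hp, hq, Prod.mk_zero_zero, map_zero])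

end QuadraticExtension

namespace IntermediateField

variable {F E : Type*} [Field F] [Field E] [Algebra F E] {K : IntermediateField F E} {x : K}
  {r : E}

theorem eq_zero_of_add_mul_eq_zero (hx : ¬ IsSquare x) (hr : r * r = x) {s t : K}
    (h : (s : E) + t * r = 0) : s = 0 ∧ t = 0 := by
  refine eq_zero_of_mul_self_eq_mul_self_mul hx (Subtype.ext ?_)
  push_cast
  linear_combination ((s : E) - t * r) * h + (t : E) * t * hr

variable (K) in
def adjoinSqrt (hx : ¬ IsSquare x) (hr : r * r = x) : IntermediateField F E where
  carrier := {y | ∃ s t : K, (s : E) + t * r = y}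
  mul_mem' := by
    rintro _ _ ⟨s, t, rfl⟩ ⟨s', t', rfl⟩
    exact ⟨s * s' + t * t' * x, s * t' + t * s', by push_cast; linear_combination -(t * t' : E) * hr⟩
  add_mem' := by
    rintro _ _ ⟨s, t, rfl⟩ ⟨s', t', rfl⟩
    exact ⟨s + s', t + t', by push_cast; ring⟩
  algebraMap_mem' c := ⟨algebraMap F K c, 0, by simp⟩
  inv_mem' := by
    rintro _ ⟨s, t, rfl⟩
    by_cases hst : (s : E) + t * r = 0
    · exact ⟨0, 0, by simp [hst]⟩
    have hN : ((s * s - t * t * x : K) : E) ≠ 0 := by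
      intro h
      obtain ⟨rfl, rfl⟩ :=
        eq_zero_of_mul_self_eq_mul_self_mul hx (sub_eq_zero.1 (by exact_mod_cast h))
      simp at hst
    refine ⟨s / (s * s - t * t * x), -t / (s * s - t * t * x),
      (eq_inv_of_mul_eq_one_left ?_)⟩
    push_cast at hN ⊢
    rw [← div_self hN, ← hr]
    ring

variable (hx : ¬ IsSquare x) (hr : r * r = x)

theorem le_adjoinSqrt : K ≤ adjoinSqrt K hx hr :=
  fun y hy => ⟨⟨y, hy⟩, 0, by simp⟩

theorem mem_adjoinSqrt : r ∈ adjoinSqrt K hx hr :=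
  ⟨0, 1, by simp⟩

theorem lt_adjoinSqrt : K < adjoinSqrt K hx hr :=
  SetLike.lt_iff_le_and_exists.2 ⟨le_adjoinSqrt hx hr, r, mem_adjoinSqrt hx hr,
    fun hrK => hx ⟨⟨r, hrK⟩, Subtype.ext hr.symm⟩⟩

theorem bijective_adjoinSqrt :
    Function.Bijective fun st : K × K =>
      inclusion (le_adjoinSqrt hx hr) st.1 +
        inclusion (le_adjoinSqrt hx hr) st.2 * ⟨r, mem_adjoinSqrt hx hr⟩ := by
  refine ⟨fun st st' h => ?_, fun ⟨y, s, t, hy⟩ => ⟨(s, t), Subtype.ext hy⟩⟩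
  have h' : ((st.1 - st'.1 : K) : E) + (st.2 - st'.2 : K) * r = 0 := by
    have := congrArg Subtype.val h
    push_cast [coe_inclusion] at this ⊢
    linear_combination this
  obtain ⟨h₁, h₂⟩ := eq_zero_of_add_mul_eq_zero hx hr h'
  exact Prod.ext (sub_eq_zero.1 h₁) (sub_eq_zero.1 h₂)

end IntermediateField

section Chain

variable {F A E : Type*} [Field F] [Ring A] [Algebra F A] [Field E] [Algebra F E]
  {σ : A →ₗ[F] A} {c : Set (IntermediateField F E)}

open IntermediateField

theorem IsChain.exists_mem_of_mem_sSup (hc : IsChain (· ≤ ·) c) (hne : c.Nonempty) {y : E}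
    (hy : y ∈ sSup c) : ∃ K ∈ c, y ∈ K := by
  have := hne.to_subtype
  rw [sSup_eq_iSup', ← SetLike.mem_coe, coe_iSup_of_directed hc.directedOn.directed_val,
    Set.mem_iUnion, Subtype.exists] at hy
  obtain ⟨K, hK, hyK⟩ := hy
  exact ⟨K, hK, hyK⟩

theorem range_lTensor_inclusion_mono {K K' M : IntermediateField F E} (h : K ≤ K')
    (hK' : K' ≤ M) :
    (Algebra.TensorProduct.lTensor (S := F) A (inclusion (h.trans hK'))).range ≤
      (Algebra.TensorProduct.lTensor (S := F) A (inclusion hK')).range := by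
  rw [← show (inclusion hK').comp (inclusion h) = inclusion (h.trans hK') from
    AlgHom.ext fun _ => rfl, Algebra.TensorProduct.lTensor, Algebra.TensorProduct.map_id_comp]
  exact AlgHom.range_comp_le_range _ _

theorem IsChain.exists_mem_range_lTensor (hc : IsChain (· ≤ ·) c) (hne : c.Nonempty)
    (z : A ⊗[F] ↥(sSup c)) :
    ∃ K, ∃ hK : K ∈ c,
      z ∈ (Algebra.TensorProduct.lTensor (S := F) A (inclusion (le_sSup hK))).range := by
  induction z using TensorProduct.induction_on with
  | zero =>
    obtain ⟨K, hK⟩ := hne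
    exact ⟨K, hK, zero_mem _⟩
  | tmul a k =>
    obtain ⟨K, hK, hkK⟩ := hc.exists_mem_of_mem_sSup hne k.2
    exact ⟨K, hK, a ⊗ₜ ⟨k, hkK⟩, rfl⟩
  | add z₁ z₂ h₁ h₂ =>
    obtain ⟨K₁, hK₁, h₁⟩ := h₁
    obtain ⟨K₂, hK₂, h₂⟩ := h₂
    rcases hc.total hK₁ hK₂ with h | h
    · exact ⟨K₂, hK₂, add_mem (range_lTensor_inclusion_mono h (le_sSup hK₂) h₁) h₂⟩
    · exact ⟨K₁, hK₁, add_mem h₁ (range_lTensor_inclusion_mono h (le_sSup hK₁) h₂)⟩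

theorem IsStronglyAnisotropic.rTensor_sSup (hc : IsChain (· ≤ ·) c) (hne : c.Nonempty)
    (h : ∀ K ∈ c, IsStronglyAnisotropic (σ.rTensor K)) :
    IsStronglyAnisotropic (σ.rTensor ↥(sSup c)) := by
  classical
  intro n hn z hz hsum
  have := hne.to_subtype
  choose K hK hzK using fun m => hc.exists_mem_range_lTensor (A := A) hne (z m)
  obtain ⟨M, hM⟩ := hc.directedOn.directed_val.finset_le
    (Finset.univ.image fun m => (⟨K m, hK m⟩ : c))
  choose w hw using fun m => (AlgHom.mem_range _).1 <| range_lTensor_inclusion_mono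
    (hM _ (Finset.mem_image_of_mem _ (Finset.mem_univ m))) (le_sSup M.2) (hzK m)
  refine h M M.2 n hn w (fun m hw0 => hz m (by rw [← hw m, hw0, map_zero])) ?_
  apply lTensor_injective (A := A) (inclusion_injective (le_sSup M.2))
  rw [map_sum, map_zero, ← hsum]
  simp only [map_mul, lTensor_rTensor_comm, hw]

end Chain

section Maximal

variable {F A E : Type*} [Field F] [Ring A] [Algebra F A] [Field E] [Algebra F E]
  {σ : A →ₗ[F] A}

theorem exists_maximal_isStronglyAnisotropic_rTensor (h : IsStronglyAnisotropic σ) :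
    ∃ K : IntermediateField F E,
      Maximal (fun K : IntermediateField F E => IsStronglyAnisotropic (σ.rTensor K)) K := by
  obtain ⟨K, -, hK⟩ :=
    zorn_le_nonempty₀ {K : IntermediateField F E | IsStronglyAnisotropic (σ.rTensor K)}
      (fun c hcS hc K hK => ⟨sSup c, IsStronglyAnisotropic.rTensor_sSup hc ⟨K, hK⟩ hcS,
        fun _ => le_sSup⟩) ⊥ h.rTensor_bot
  exact ⟨K, hK⟩

theorem Maximal.isSquare_of_isSumSq [IsAlgClosed E] (hanti : ∀ x y, σ (x * y) = σ y * σ x)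
    (hσ1 : σ 1 = 1) {K : IntermediateField F E}
    (hK : Maximal (fun K : IntermediateField F E => IsStronglyAnisotropic (σ.rTensor K)) K)
    {x : K} (hx : IsSumSq x) : IsSquare x := by
  by_contra hsq
  obtain ⟨r, hr⟩ := IsAlgClosed.exists_eq_mul_self (x : E)
  have hx0 : x ≠ 0 := by
    rintro rfl
    exact hsq ⟨0, (mul_zero 0).symm⟩
  exact hK.not_prop_of_gt (IntermediateField.lt_adjoinSqrt hsq hr.symm)
    (hK.prop.rTensor_of_mul_self_eq hanti hσ1 hx hx0 (Subtype.ext hr.symm)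
      (IntermediateField.bijective_adjoinSqrt hsq hr.symm))

end Maximal

theorem exists_maximal_pythagorean_strongly_anisotropic_general
    (F : Type*) [Field F] (A : Type*) [Ring A] [Algebra F A]
    [IsSimpleRing A]
    (σ : A →ₗ[F] A)
    (hanti : ∀ x y : A, σ (x * y) = σ y * σ x)
    (hinv : ∀ x : A, σ (σ x) = x)
    (hstrong : ∀ (n : ℕ), 0 < n → ∀ x : Fin n → A,
      (∀ i, x i ≠ 0) → ∑ i, σ (x i) * x i ≠ 0) :
    ∃ K : IntermediateField F (AlgebraicClosure F),
      -- `K` is formally real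
      (¬ IsSumSq (-1 : ↥K)) ∧
      -- `K` is Pythagorean
      (∀ x : ↥K, IsSumSq x → IsSquare x) ∧
      -- `σ_K` is strongly anisotropic
      (∀ (n : ℕ), 0 < n → ∀ z : Fin n → A ⊗[F] ↥K,
        (∀ m, z m ≠ 0) →
          ∑ m, (TensorProduct.map σ (LinearMap.id : ↥K →ₗ[F] ↥K)) (z m) * z m ≠ 0) ∧
      -- over any strictly larger algebraic extension `L` of `K`, `σ_L` is weakly isotropic
      (∀ L : IntermediateField F (AlgebraicClosure F), K < L →
        ∃ (n : ℕ), 0 < n ∧ ∃ z : Fin n → A ⊗[F] ↥L,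
          (∀ m, z m ≠ 0) ∧
            ∑ m, (TensorProduct.map σ (LinearMap.id : ↥L →ₗ[F] ↥L)) (z m) * z m = 0) := by
  have hσ1 : σ 1 = 1 := map_one_of_antimul_of_involutive hanti hinv
  obtain ⟨K, hK⟩ := exists_maximal_isStronglyAnisotropic_rTensor (E := AlgebraicClosure F) hstrong
  refine ⟨K, not_isSumSq_neg_one_of_isStronglyAnisotropic hanti hσ1 hK.prop,
    fun x hx => hK.isSquare_of_isSumSq hanti hσ1 hx, hK.prop, fun L hKL => ?_⟩
  have hL := hK.not_prop_of_gt hKL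
  simp only [IsStronglyAnisotropic, not_forall, not_not, exists_prop] at hL
  exact hL

/-- Let `(A, σ)` be a central simple algebra with an (orthogonal) involution of the first
kind over a formally real field `F`, and suppose `σ` is strongly anisotropic.  Then there
is an algebraic extension `K` of `F` (inside an algebraic closure) that is formally real
and Pythagorean, such that `σ_K` is strongly anisotropic while `σ_L` is weakly isotropic
for every strictly larger algebraic extension `L` of `K`. -/
theorem exists_maximal_pythagorean_strongly_anisotropic
    (F : Type*) [Field F] (A : Type*) [Ring A] [Algebra F A]
    [Algebra.IsCentral F A] [IsSimpleRing A] [FiniteDimensional F A]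
    (σ : A →ₗ[F] A)
    (hanti : ∀ x y : A, σ (x * y) = σ y * σ x)
    (hinv : ∀ x : A, σ (σ x) = x)
    (hFR : ¬ IsSumSq (-1 : F))
    (hstrong : ∀ (n : ℕ), 0 < n → ∀ x : Fin n → A,
      (∀ i, x i ≠ 0) → ∑ i, σ (x i) * x i ≠ 0) :
    ∃ K : IntermediateField F (AlgebraicClosure F),
      -- `K` is formally real
      (¬ IsSumSq (-1 : ↥K)) ∧
      -- `K` is Pythagorean
      (∀ x : ↥K, IsSumSq x → IsSquare x) ∧
      -- `σ_K` is strongly anisotropic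
      (∀ (n : ℕ), 0 < n → ∀ z : Fin n → A ⊗[F] ↥K,
        (∀ m, z m ≠ 0) →
          ∑ m, (TensorProduct.map σ (LinearMap.id : ↥K →ₗ[F] ↥K)) (z m) * z m ≠ 0) ∧
      -- over any strictly larger algebraic extension `L` of `K`, `σ_L` is weakly isotropic
      (∀ L : IntermediateField F (AlgebraicClosure F), K < L →
        ∃ (n : ℕ), 0 < n ∧ ∃ z : Fin n → A ⊗[F] ↥L,
          (∀ m, z m ≠ 0) ∧
            ∑ m, (TensorProduct.map σ (LinearMap.id : ↥L →ₗ[F] ↥L)) (z m) * z m = 0) :=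
  exists_maximal_pythagorean_strongly_anisotropic_general F A σ hanti hinv hstrong
end

section
/- Let F be a formally real Pythagorean field and Q = (t,t) the quaternion division algebra over F((t)) with orthogonal involution σ = Int(i) ∘ γ. Then the element 2j, which is a sum of hermitian squares in (Q, σ), is not itself a hermitian square: there is no x ∈ Q with x·σ(x) = 2j. -/
open Quaternion

/-- the variable `t` of `F((t))` -/
noncomputable def lsT (F : Type*) [Field F] : LaurentSeries F := HahnSeries.single 1 1

/-- `i` in the quaternion algebra `Q = (t,t)` over `F((t))` -/
noncomputable def qI (F : Type*) [Field F] : ℍ[LaurentSeries F, lsT F, lsT F] := ⟨0, 1, 0, 0⟩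

/-- `j` in the quaternion algebra `Q = (t,t)` over `F((t))` -/
noncomputable def qJ (F : Type*) [Field F] : ℍ[LaurentSeries F, lsT F, lsT F] := ⟨0, 0, 1, 0⟩

/-- `k = ij` in the quaternion algebra `Q = (t,t)` over `F((t))` -/
noncomputable def qK (F : Type*) [Field F] : ℍ[LaurentSeries F, lsT F, lsT F] := ⟨0, 0, 0, 1⟩

/-- The orthogonal involution `σ = Int(i) ∘ γ` on `Q = (t,t)` over `F((t))`:
since `i⁻¹ = t⁻¹·i`, we have `σ(x) = t⁻¹ • (i · γ(x) · i)`, where `γ = star`. -/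
noncomputable def qSigma (F : Type*) [Field F] (x : ℍ[LaurentSeries F, lsT F, lsT F]) :
    ℍ[LaurentSeries F, lsT F, lsT F] := (lsT F)⁻¹ • (qI F * star x * qI F)

/-!
The reduced norm is multiplicative and invariant under `σ`, so `x · σ(x) = 2j` would make
`Nrd(2j) = -4t` a square `Nrd(x)²` in `F((t))`. But squares of nonzero Laurent series have even
order, while `-4t` has order `1` as soon as `4 ≠ 0`, which holds because a formally real field
has characteristic zero.
-/

namespace QuaternionAlgebra

variable {R : Type*} [CommRing R] {c₁ c₂ : R}

def reducedNorm (x : ℍ[R, c₁, c₂]) : R :=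
  x.re ^ 2 - c₁ * x.imI ^ 2 - c₂ * x.imJ ^ 2 + c₁ * c₂ * x.imK ^ 2

theorem reducedNorm_mul (x y : ℍ[R, c₁, c₂]) :
    reducedNorm (x * y) = reducedNorm x * reducedNorm y := by
  simp only [reducedNorm, re_mul, imI_mul, imJ_mul, imK_mul]
  ring

theorem reducedNorm_star (x : ℍ[R, c₁, c₂]) : reducedNorm (star x) = reducedNorm x := by
  simp only [reducedNorm, re_star, imI_star, imJ_star, imK_star]
  ring

theorem reducedNorm_smul (r : R) (x : ℍ[R, c₁, c₂]) :
    reducedNorm (r • x) = r ^ 2 * reducedNorm x := by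
  simp only [reducedNorm, re_smul, imI_smul, imJ_smul, imK_smul, smul_eq_mul]
  ring

theorem reducedNorm_coe (r : R) : reducedNorm (r : ℍ[R, c₁, c₂]) = r ^ 2 := by
  simp [reducedNorm]

theorem reducedNorm_i : reducedNorm (⟨0, 1, 0, 0⟩ : ℍ[R, c₁, c₂]) = -c₁ := by
  simp [reducedNorm]

theorem reducedNorm_j : reducedNorm (⟨0, 0, 1, 0⟩ : ℍ[R, c₁, c₂]) = -c₂ := by
  simp [reducedNorm]

theorem reducedNorm_inv_smul_i_mul_star_mul_i {K : Type*} [Field K] {c₁ c₂ : K} (hc₁ : c₁ ≠ 0)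
    (x : ℍ[K, c₁, c₂]) :
    reducedNorm (c₁⁻¹ • (⟨0, 1, 0, 0⟩ * star x * ⟨0, 1, 0, 0⟩ : ℍ[K, c₁, c₂])) =
      reducedNorm x := by
  rw [reducedNorm_smul, reducedNorm_mul, reducedNorm_mul, reducedNorm_star, reducedNorm_i]
  field_simp

end QuaternionAlgebra

theorem HahnSeries.not_isSquare_of_odd_order {R : Type*} [Ring R] [NoZeroDivisors R]
    {x : HahnSeries ℤ R} (hx : Odd x.order) : ¬ IsSquare x := by
  rintro ⟨y, rfl⟩
  have hy : y ≠ 0 := by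
    rintro rfl
    simp at hx
  rw [order_mul hy hy] at hx
  exact Int.not_even_iff_odd.mpr hx ⟨y.order, rfl⟩

open QuaternionAlgebra

section LaurentQuaternion

variable (F : Type*) [Field F]

theorem lsT_ne_zero : lsT F ≠ 0 :=
  HahnSeries.single_ne_zero one_ne_zero

theorem order_ofNat_mul_lsT [CharZero F] (n : ℕ) [n.AtLeastTwo] :
    ((ofNat(n) : LaurentSeries F) * lsT F).order = 1 := by
  rw [← HahnSeries.single_zero_ofNat, lsT, HahnSeries.single_mul_single, zero_add, mul_one,
    HahnSeries.order_single (by simp)]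

theorem reducedNorm_qSigma (x : ℍ[LaurentSeries F, lsT F, lsT F]) :
    reducedNorm (qSigma F x) = reducedNorm x :=
  reducedNorm_inv_smul_i_mul_star_mul_i (lsT_ne_zero F) x

theorem reducedNorm_two_mul_qJ : reducedNorm (2 * qJ F) = -(4 * lsT F) := by
  rw [reducedNorm_mul, ← coe_ofNat, reducedNorm_coe, qJ, reducedNorm_j]
  norm_num

end LaurentQuaternion

theorem two_j_not_a_hermitian_square_general (F : Type*) [Field F]
    (hFR : ¬ IsSumSq (-1 : F)) :
    ¬ ∃ x : ℍ[LaurentSeries F, lsT F, lsT F], x * qSigma F x = 2 * qJ F := by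
  have : IsSemireal F := .of_not_isSumSq_neg_one hFR
  rintro ⟨x, hx⟩
  have hsq : IsSquare (reducedNorm (2 * qJ F)) :=
    ⟨reducedNorm x, by rw [← hx, reducedNorm_mul, reducedNorm_qSigma]⟩
  rw [reducedNorm_two_mul_qJ] at hsq
  refine HahnSeries.not_isSquare_of_odd_order ?_ hsq
  rw [HahnSeries.order_neg, order_ofNat_mul_lsT]
  exact odd_one

/-- For a formally real Pythagorean field `F` and the quaternion division algebra
`Q = (t,t)` over `F((t))` with orthogonal involution `σ = Int(i) ∘ γ`, the element `2j`
(a sum of hermitian squares) is not itself a hermitian square: no `x ∈ Q` satisfies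
`x·σ(x) = 2j`. -/
theorem two_j_not_a_hermitian_square (F : Type*) [Field F]
    (hFR : ¬ IsSumSq (-1 : F)) (hPy : ∀ x : F, IsSumSq x → IsSquare x) :
    ¬ ∃ x : ℍ[LaurentSeries F, lsT F, lsT F], x * qSigma F x = 2 * qJ F :=
  two_j_not_a_hermitian_square_general F hFR
end

section
/- Every quadratic form over ℚ that becomes isotropic over ℝ is weakly isotropic over ℚ. -/
/-!
A real zero of `∑ aᵢ xᵢ²` forces coefficients `aᵢ > 0 > aⱼ`. Writing `aᵢ / (-aⱼ) = N / M`
gives `M aᵢ + N aⱼ = 0`, so `M` copies of the unit vector `eᵢ` followed by `N` copies of `eⱼ`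
form a rational zero of the `(M + N)`-fold sum of the form.
-/

open Finset

section OrderedField

variable {K ι : Type*} [Field K] [LinearOrder K] [IsStrictOrderedRing K] [Fintype ι]

theorem sum_mul_sq_pos_of_pos {a x : ι → K} (ha : ∀ i, 0 < a i) (hx : ∃ i, x i ≠ 0) :
    0 < ∑ i, a i * x i ^ 2 := by
  obtain ⟨i₀, hi₀⟩ := hx
  exact sum_pos' (fun i _ => mul_nonneg (ha i).le (sq_nonneg _))
    ⟨i₀, mem_univ _, mul_pos (ha i₀) (pow_two_pos_of_ne_zero hi₀)⟩

theorem exists_pos_and_neg_of_sum_mul_sq_eq_zero {a x : ι → K} (ha : ∀ i, a i ≠ 0)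
    (hx : ∃ i, x i ≠ 0) (hsum : ∑ i, a i * x i ^ 2 = 0) : ∃ i j, 0 < a i ∧ a j < 0 := by
  by_contra! h
  by_cases hpos : ∃ i, 0 < a i
  · obtain ⟨i, hi⟩ := hpos
    have := sum_mul_sq_pos_of_pos (fun j => (h i j hi).lt_of_ne' (ha j)) hx
    exact this.ne' hsum
  · simp only [not_exists, not_lt] at hpos
    have := sum_mul_sq_pos_of_pos (a := -a) (fun j => neg_pos.2 ((hpos j).lt_of_ne (ha j))) hx
    simp only [Pi.neg_apply, neg_mul, sum_neg_distrib, hsum, neg_zero] at this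
    exact this.false

end OrderedField

theorem Rat.exists_nat_mul_add_nat_mul_eq_zero {p q : ℚ} (hp : 0 < p) (hq : q < 0) :
    ∃ M N : ℕ, 0 < M ∧ M * p + N * q = 0 := by
  set r := p / -q with hr_def
  have hr : 0 < r := div_pos hp (neg_pos.2 hq)
  refine ⟨r.den, r.num.natAbs, r.den_pos, ?_⟩
  have hnum : (r.num.natAbs : ℚ) = r.den * r := by
    rw [Nat.cast_natAbs, abs_of_pos (Rat.num_pos.2 hr), mul_comm, Rat.mul_den_eq_num]
  have hrq : r * q = -p := by rw [hr_def, div_neg, neg_mul, div_mul_cancel₀ p hq.ne]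
  rw [hnum]
  linear_combination (r.den : ℚ) * hrq

theorem sum_mul_single_sq {R ι : Type*} [CommSemiring R] [Fintype ι] [DecidableEq ι]
    (a : ι → R) (i : ι) (c : R) : ∑ k, a k * (Pi.single i c : ι → R) k ^ 2 = a i * c ^ 2 := by
  rw [sum_eq_single i (fun k _ hk => by simp [hk]) (by simp)]
  simp

theorem sum_sum_mul_sq_append_single {R ι : Type*} [CommSemiring R] [Fintype ι] [DecidableEq ι]
    (a : ι → R) (i j : ι) (M N : ℕ) :
    ∑ p, ∑ k, a k * Fin.append (fun _ : Fin M => (Pi.single i 1 : ι → R))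
      (fun _ : Fin N => Pi.single j 1) p k ^ 2
      = M * a i + N * a j := by
  simp [Fin.sum_univ_add, sum_mul_single_sq]

/-- Every (diagonal, nondegenerate) quadratic form over `ℚ` that becomes isotropic over
`ℝ` is weakly isotropic over `ℚ`: some multiple `m × q` of the form is isotropic. -/
theorem rat_real_totally_positive
    (n : ℕ) (a : Fin n → ℚ) (ha : ∀ i, a i ≠ 0)
    (hiso : ∃ x : Fin n → ℝ, (∃ i, x i ≠ 0) ∧ ∑ i, (a i : ℝ) * x i ^ 2 = 0) :
    ∃ (m : ℕ), 0 < m ∧ ∃ y : Fin m → Fin n → ℚ,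
      (∃ p i, y p i ≠ 0) ∧ ∑ p, ∑ i, a i * y p i ^ 2 = 0 := by
  obtain ⟨x, hx, hsum⟩ := hiso
  obtain ⟨i, j, hi, hj⟩ := exists_pos_and_neg_of_sum_mul_sq_eq_zero
    (fun k => Rat.cast_ne_zero.2 (ha k)) hx hsum
  obtain ⟨M, N, hM, hMN⟩ :=
    Rat.exists_nat_mul_add_nat_mul_eq_zero (Rat.cast_pos.1 hi) (Rat.cast_lt_zero.1 hj)
  refine ⟨M + N, by omega,
    Fin.append (fun _ : Fin M => Pi.single i 1) (fun _ : Fin N => Pi.single j 1),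
    ⟨Fin.castAdd N ⟨0, hM⟩, i, by rw [Fin.append_left]; simp⟩, ?_⟩
  rw [sum_sum_mul_sq_append_single, hMN]
end

section
/- Every quadratic form over ℚ((t)) that becomes isotropic over ℝ((t)) is weakly isotropic over ℚ((t)). (I.e., the extension ℝ((t))/ℚ((t)) is totally positive.) -/
/-- The coefficientwise inclusion `ℚ((t)) → ℝ((t))` of Laurent series fields. -/
noncomputable def laurentIncl (x : LaurentSeries ℚ) : LaurentSeries ℝ :=
  x.map (algebraMap ℚ ℝ)

/-!
Given an isotropic vector `x` over `ℝ((t))`, compare the terms `aᵢ xᵢ²` of minimal order: their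
leading coefficients sum to zero in `ℝ`, so there are indices `i ≠ j` for which `aᵢ xᵢ²` and
`aⱼ xⱼ²` have the same order while `aᵢ` and `aⱼ` have leading coefficients of opposite signs.
Then `c = -aⱼ / aᵢ` has even order and positive leading coefficient. By Hensel's lemma in `ℚ⟦t⟧`
such a `c` is a positive rational times a square, hence a sum of squares `∑ sₚ²` in `ℚ((t))`, and
the vectors `sₚ eᵢ + δₚ₀ eⱼ` are a nontrivial zero of `m × ⟨aᵢ, aⱼ⟩`.
-/

theorem IsSumSq.map {R S F : Type*} [NonUnitalNonAssocSemiring R] [NonUnitalNonAssocSemiring S]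
    [FunLike F R S] [NonUnitalRingHomClass F R S] (f : F) {s : R} (hs : IsSumSq s) :
    IsSumSq (f s) := by
  induction hs with
  | zero => simp
  | sq_add a _ ih => simpa using ih.sq_add (f a)

theorem IsSumSq.exists_fin_sum_sq {R : Type*} [Semiring R] {s : R} (hs : IsSumSq s) :
    ∃ m, ∃ r : Fin m → R, ∑ p, r p ^ 2 = s := by
  induction hs with
  | zero => exact ⟨0, Fin.elim0, by simp⟩
  | sq_add a _ ih =>
    obtain ⟨m, r, rfl⟩ := ih
    exact ⟨m + 1, Fin.cons a r, by simp [Fin.sum_univ_succ, sq]⟩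

theorem Rat.isSumSq_of_nonneg {q : ℚ} (hq : 0 ≤ q) : IsSumSq q := by
  have hden : (q.den : ℚ) ≠ 0 := by positivity
  have hq' : q = ((q.num.natAbs * q.den : ℕ) : ℚ) * ((q.den : ℚ)⁻¹ * (q.den : ℚ)⁻¹) := by
    nth_rewrite 1 [← Rat.num_div_den q]
    push_cast [Nat.cast_natAbs, abs_of_nonneg (Rat.num_nonneg.2 hq)]
    field_simp
  rw [hq']
  exact (IsSumSq.natCast _).mul (IsSumSq.mul_self _)

theorem PowerSeries.isSquare_of_constantCoeff_eq_one {R : Type*} [CommRing R]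
    (h2 : IsUnit (2 : R)) {f : PowerSeries R} (hf : constantCoeff f = 1) : IsSquare f := by
  have hmem : (Polynomial.X ^ 2 - Polynomial.C f).eval 1 ∈ Ideal.span {X} := by
    rw [Ideal.mem_span_singleton, X_dvd_iff]
    simp [hf]
  have hderiv : (Polynomial.X ^ 2 - Polynomial.C f).derivative.eval 1 = C (2 : R) := by
    simp [map_ofNat, one_add_one_eq_two]
  have hunit : IsUnit (Ideal.Quotient.mk (Ideal.span {X})
      ((Polynomial.X ^ 2 - Polynomial.C f).derivative.eval 1)) :=
    hderiv ▸ (h2.map C).map _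
  -- `R⟦X⟧` is `X`-adically complete, hence Henselian at `(X)`.
  obtain ⟨s, hs, -⟩ := HenselianRing.is_henselian _
    (Polynomial.monic_X_pow_sub_C f two_ne_zero) 1 hmem hunit
  exact ⟨s, by simpa [sub_eq_zero, sq, eq_comm] using hs⟩

namespace HahnSeries

section LinearOrder

variable {Γ : Type*} [Zero Γ] [LinearOrder Γ]

theorem order_map_of_injective {R S F : Type*} [Zero R] [Zero S] [FunLike F R S]
    [ZeroHomClass F R S] {f : F} (hf : Function.Injective f) (x : HahnSeries Γ R) :
    (x.map f).order = x.order := by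
  rcases eq_or_ne x 0 with rfl | hx
  · have : (0 : HahnSeries Γ R).map f = 0 := by ext; simp
    rw [this, order_zero, order_zero]
  have hmap : (x.map f).coeff x.order ≠ 0 := by
    simpa [map_eq_zero_iff f hf] using coeff_order_eq_zero.not.2 hx
  refine le_antisymm (order_le_of_coeff_ne_zero hmap) (order_le_of_coeff_ne_zero ?_)
  have := coeff_order_eq_zero.not.2 (ne_zero_of_coeff_ne_zero hmap)
  rw [map_coeff] at this
  exact fun h => this (by rw [h, map_zero])

theorem leadingCoeff_map_of_injective {R S F : Type*} [Zero R] [Zero S] [FunLike F R S]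
    [ZeroHomClass F R S] {f : F} (hf : Function.Injective f) (x : HahnSeries Γ R) :
    (x.map f).leadingCoeff = f x.leadingCoeff := by
  rw [leadingCoeff_eq, leadingCoeff_eq, order_map_of_injective hf, map_coeff]

theorem exists_pos_neg_leadingCoeff_of_sum_eq_zero {R ι : Type*} [AddCommGroup R]
    [LinearOrder R] [IsOrderedAddMonoid R] {s : Finset ι} {f : ι → HahnSeries Γ R}
    (hsum : ∑ i ∈ s, f i = 0) (hne : ∃ i ∈ s, f i ≠ 0) :
    ∃ i ∈ s, ∃ j ∈ s, (f i).order = (f j).order ∧ 0 < (f i).leadingCoeff ∧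
      (f j).leadingCoeff < 0 := by
  classical
  obtain ⟨i₀, hi₀, hmin⟩ := (s.filter (f · ≠ 0)).exists_min_image (fun i => (f i).order)
    (by obtain ⟨i, hi, h⟩ := hne; exact ⟨i, by simp [hi, h]⟩)
  set μ := (f i₀).order
  have hcoeff : ∀ i ∈ s, (f i).coeff μ ≠ 0 →
      (f i).order = μ ∧ (f i).coeff μ = (f i).leadingCoeff := by
    intro i hi hμ
    have hord : (f i).order = μ := le_antisymm (order_le_of_coeff_ne_zero hμ)
      (hmin i (by simp [hi, ne_zero_of_coeff_ne_zero hμ]))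
    exact ⟨hord, by rw [leadingCoeff_eq, hord]⟩
  have hsumμ : ∑ i ∈ s, (f i).coeff μ = 0 := by rw [← coeff_sum, hsum, coeff_zero]
  rw [Finset.mem_filter] at hi₀
  have hi₀μ : (f i₀).coeff μ ≠ 0 := coeff_order_eq_zero.not.2 hi₀.2
  obtain ⟨i, hi, hpos⟩ :=
    Finset.exists_pos_of_sum_zero_of_exists_nonzero _ hsumμ ⟨i₀, hi₀.1, hi₀μ⟩
  obtain ⟨j, hj, hneg⟩ := Finset.exists_pos_of_sum_zero_of_exists_nonzero
    (fun i => -(f i).coeff μ) (by simp [hsumμ]) ⟨i₀, hi₀.1, neg_ne_zero.2 hi₀μ⟩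
  rw [neg_pos] at hneg
  obtain ⟨hoi, hci⟩ := hcoeff i hi hpos.ne'
  obtain ⟨hoj, hcj⟩ := hcoeff j hj hneg.ne
  exact ⟨i, hi, j, hj, hoi.trans hoj.symm, hci ▸ hpos, hcj ▸ hneg⟩

end LinearOrder

section Field

variable {Γ : Type*} [AddCommGroup Γ] [LinearOrder Γ] [IsOrderedAddMonoid Γ]
  {K : Type*} [Field K]

theorem order_div {x y : HahnSeries Γ K} (hx : x ≠ 0) (hy : y ≠ 0) :
    (x / y).order = x.order - y.order := by
  have h := order_mul (div_ne_zero hx hy) hy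
  rw [div_mul_cancel₀ x hy] at h
  exact eq_sub_of_add_eq h.symm

theorem leadingCoeff_div (x y : HahnSeries Γ K) :
    (x / y).leadingCoeff = x.leadingCoeff / y.leadingCoeff := by
  rcases eq_or_ne y 0 with rfl | hy
  · simp
  have h := leadingCoeff_mul (x / y) y
  rw [div_mul_cancel₀ x hy] at h
  exact eq_div_of_mul_eq (leadingCoeff_ne_zero.2 hy) h.symm

end Field

end HahnSeries

namespace LaurentSeries

open HahnSeries

theorem exists_eq_C_leadingCoeff_mul_sq {K : Type*} [Field K] (h2 : (2 : K) ≠ 0) {c : K⸨X⸩}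
    (hc : Even c.order) : ∃ z, c = C c.leadingCoeff * z ^ 2 := by
  rcases eq_or_ne c 0 with rfl | hc0
  · exact ⟨0, by simp⟩
  obtain ⟨k, hk⟩ := hc
  have hL : c.leadingCoeff ≠ 0 := leadingCoeff_ne_zero.2 hc0
  have hconst : PowerSeries.constantCoeff c.powerSeriesPart = c.leadingCoeff := by
    rw [← PowerSeries.coeff_zero_eq_constantCoeff_apply, powerSeriesPart_coeff]
    simp [leadingCoeff_eq]
  obtain ⟨s, hs⟩ := PowerSeries.isSquare_of_constantCoeff_eq_one h2.isUnit
    (f := PowerSeries.C c.leadingCoeff⁻¹ * c.powerSeriesPart) (by simp [hconst, hL])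
  have hpart : c.powerSeriesPart = PowerSeries.C c.leadingCoeff * (s * s) := by
    rw [← hs, ← mul_assoc, ← map_mul, mul_inv_cancel₀ hL, map_one, one_mul]
  have hsingle : (single (k + k) 1 : K⸨X⸩) = single k 1 * single k 1 := by
    rw [single_mul_single, one_mul]
  refine ⟨single k 1 * ofPowerSeries ℤ K s, ?_⟩
  conv_lhs => rw [← single_order_mul_powerSeriesPart c]
  rw [hpart, hk, hsingle, map_mul, map_mul, ofPowerSeries_C]
  ring

theorem isSumSq_of_even_order {K : Type*} [Field K] (h2 : (2 : K) ≠ 0) {c : K⸨X⸩}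
    (hc : Even c.order) (hlc : IsSumSq c.leadingCoeff) : IsSumSq c := by
  obtain ⟨z, hz⟩ := exists_eq_C_leadingCoeff_mul_sq h2 hc
  rw [hz, sq]
  exact (hlc.map C).mul (IsSumSq.mul_self z)

theorem isSumSq_neg_div {a b : ℚ⸨X⸩} (hord : Even (b.order - a.order))
    (hlc : a.leadingCoeff * b.leadingCoeff < 0) : IsSumSq (-b / a) := by
  have ha : a ≠ 0 := by rintro rfl; simp at hlc
  have hb : b ≠ 0 := by rintro rfl; simp at hlc
  refine isSumSq_of_even_order two_ne_zero ?_ (Rat.isSumSq_of_nonneg ?_)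
  · rwa [order_div (neg_ne_zero.2 hb) ha, order_neg]
  · have ha' : a.leadingCoeff ≠ 0 := leadingCoeff_ne_zero.2 ha
    rw [leadingCoeff_div, leadingCoeff_neg,
      show -b.leadingCoeff / a.leadingCoeff
        = -(a.leadingCoeff * b.leadingCoeff) / (a.leadingCoeff * a.leadingCoeff) by
        field_simp]
    exact div_nonneg (by linarith) (mul_self_nonneg _)

end LaurentSeries

theorem exists_weakly_isotropic_of_isSumSq {R ι : Type*} [CommRing R] [Fintype ι]
    [DecidableEq ι] {a : ι → R} {i j : ι} (hij : i ≠ j) (hj : a j ≠ 0) {s : R}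
    (hs : IsSumSq s) (h : a i * s + a j = 0) :
    ∃ m, 0 < m ∧ ∃ y : Fin m → ι → R, (∃ p l, y p l ≠ 0) ∧ ∑ p, ∑ l, a l * y p l ^ 2 = 0 := by
  have : Nontrivial R := ⟨⟨a j, 0, hj⟩⟩
  obtain ⟨m, r, rfl⟩ := hs.exists_fin_sum_sq
  have hm : 0 < m := Nat.pos_of_ne_zero <| by rintro rfl; simp_all
  let p₀ : Fin m := ⟨0, hm⟩
  let y : Fin m → ι → R := fun p => Pi.single i (r p) + Pi.single j (if p = p₀ then 1 else 0)
  have hrow : ∀ p, ∑ l, a l * y p l ^ 2 = a i * r p ^ 2 + a j * if p = p₀ then 1 else 0 := by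
    intro p
    rw [Fintype.sum_eq_add i j hij (by intro l hl; simp [y, hl.1, hl.2])]
    simp [y, hij, hij.symm]
  refine ⟨m, hm, y, ⟨p₀, j, by simp [y, hij.symm]⟩, ?_⟩
  simp only [hrow, Finset.sum_add_distrib, ← Finset.mul_sum, Finset.sum_ite_eq', Finset.mem_univ,
    if_true, mul_one]
  exact h

theorem laurentIncl_order (x : LaurentSeries ℚ) : (laurentIncl x).order = x.order :=
  HahnSeries.order_map_of_injective (algebraMap ℚ ℝ).injective x

theorem laurentIncl_leadingCoeff (x : LaurentSeries ℚ) :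
    (laurentIncl x).leadingCoeff = x.leadingCoeff :=
  HahnSeries.leadingCoeff_map_of_injective (algebraMap ℚ ℝ).injective x

/-- Every (diagonal, nondegenerate) quadratic form over `ℚ((t))` that becomes isotropic
over `ℝ((t))` is weakly isotropic over `ℚ((t))`; i.e. the extension `ℝ((t))/ℚ((t))` is
totally positive. -/
theorem laurent_rat_real_totally_positive
    (n : ℕ) (a : Fin n → LaurentSeries ℚ) (ha : ∀ i, a i ≠ 0)
    (hiso : ∃ x : Fin n → LaurentSeries ℝ, (∃ i, x i ≠ 0) ∧
      ∑ i, laurentIncl (a i) * x i ^ 2 = 0) :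
    ∃ (m : ℕ), 0 < m ∧ ∃ y : Fin m → Fin n → LaurentSeries ℚ,
      (∃ p i, y p i ≠ 0) ∧ ∑ p, ∑ i, a i * y p i ^ 2 = 0 := by
  obtain ⟨x, ⟨i₀, hx₀⟩, hsum⟩ := hiso
  have hterm₀ : laurentIncl (a i₀) * x i₀ ^ 2 ≠ 0 := by
    refine mul_ne_zero ?_ (pow_ne_zero 2 hx₀)
    rw [← HahnSeries.leadingCoeff_ne_zero, laurentIncl_leadingCoeff]
    exact_mod_cast HahnSeries.leadingCoeff_ne_zero.2 (ha i₀)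
  obtain ⟨i, -, j, -, hord, hi, hj⟩ :=
    HahnSeries.exists_pos_neg_leadingCoeff_of_sum_eq_zero hsum ⟨i₀, Finset.mem_univ _, hterm₀⟩
  rw [HahnSeries.leadingCoeff_mul] at hi hj
  rw [HahnSeries.order_mul_of_ne_zero hi.ne', HahnSeries.order_mul_of_ne_zero hj.ne,
    HahnSeries.order_pow, HahnSeries.order_pow, two_nsmul, two_nsmul, laurentIncl_order,
    laurentIncl_order] at hord
  rw [laurentIncl_leadingCoeff, sq, HahnSeries.leadingCoeff_mul] at hi hj
  have hai : 0 < (a i).leadingCoeff := by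
    exact_mod_cast pos_of_mul_pos_left hi (mul_self_nonneg _)
  have haj : (a j).leadingCoeff < 0 := by
    exact_mod_cast neg_of_mul_neg_left hj (mul_self_nonneg _)
  have hij : i ≠ j := by rintro rfl; exact lt_asymm hai haj
  have hc : IsSumSq (-a j / a i) := LaurentSeries.isSumSq_neg_div
    ⟨(x i).order - (x j).order, by omega⟩ (mul_neg_of_pos_of_neg hai haj)
  exact exists_weakly_isotropic_of_isSumSq hij (ha j) hc (by field_simp [ha i]; ring)
end

section
/- Let K/F be a field extension of formally real fields and suppose every quadratic form over F that is isotropic over K is weakly isotropic over F. Let A be a central simple F-algebra with orthogonal involution σ of the first kind, assume K/F is a finite Galois extension of 2-power degree. If σ ⊗ 1 on A ⊗_F K is weakly isotropic, then σ is weakly isotropic over F. -/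
/-!
The trace form of the separable extension `K/F` is nondegenerate, so it has an orthogonal
basis `(bⱼ)` with `dⱼ = Tr(bⱼ²) ≠ 0`. In `K`, `dⱼ` is the sum of the squares of the Galois
conjugates of `bⱼ`, so the form `⟨-dⱼ, 1, …, 1⟩` is isotropic over `K`, hence weakly isotropic
over `F`, which forces `dⱼ` to be a sum of squares in `F`. Writing `zₘ = ∑ⱼ zₘⱼ ⊗ bⱼ` and
applying `id ⊗ Tr` to `∑ₘ (σ ⊗ 1)(zₘ) zₘ = 0` gives `∑ₘⱼ dⱼ σ(zₘⱼ) zₘⱼ = 0`, and expanding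
each `dⱼ` as a sum of squares exhibits `σ` as weakly isotropic over `F`.
-/

open TensorProduct Finset

instance IsSemireal.isFormallyReal {F : Type*} [Field F] [IsSemireal F] : IsFormallyReal F :=
  IsFormallyReal.of_eq_zero_of_eq_zero_of_mul_self_add fun {s a} hs h => by
    by_contra ha
    apply IsSemireal.not_isSumSq_neg_one (R := F)
    have : -1 = s * (a⁻¹ * a⁻¹) := by field_simp; linear_combination -h
    exact this ▸ hs.mul (.mul_self _)

theorem IsFormallyReal.eq_zero_of_sum_eq_zero {R ι : Type*} [NonUnitalNonAssocSemiring R]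
    [IsFormallyReal R] {s : Finset ι} {f : ι → R} (hf : ∀ i ∈ s, IsSumSq (f i))
    (h : ∑ i ∈ s, f i = 0) : ∀ i ∈ s, f i = 0 := by
  classical
  induction s using Finset.induction_on with
  | empty => simp
  | insert a s ha ih =>
    rw [sum_insert ha] at h
    have hfa : IsSumSq (f a) := hf a (mem_insert_self a s)
    have hfs : ∀ i ∈ s, IsSumSq (f i) := fun i hi => hf i (mem_insert_of_mem hi)
    have hsum : IsSumSq (∑ i ∈ s, f i) := IsSumSq.sum hfs
    intro i hi
    rcases mem_insert.mp hi with rfl | hi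
    · exact eq_zero_of_add_right hfa hsum h
    · exact ih hfs (eq_zero_of_add_left hfa hsum h) i hi

theorem IsSumSq.exists_eq_sum_sq {R : Type*} [Semiring R] {s : R} (h : IsSumSq s) :
    ∃ (n : ℕ) (c : Fin n → R), s = ∑ i, c i ^ 2 := by
  induction h with
  | zero => exact ⟨0, Fin.elim0, by simp⟩
  | sq_add a _ ih =>
    obtain ⟨n, c, rfl⟩ := ih
    exact ⟨n + 1, Fin.cons a c, by simp [Fin.sum_univ_succ, sq]⟩

theorem isSumSq_of_isSumSq_algebraMap {F K : Type*} [Field F] [IsFormallyReal F] [CommRing K]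
    [Nontrivial K] [Algebra F K]
    (htp : ∀ (n : ℕ) (a : Fin n → F), (∀ i, a i ≠ 0) →
      (∃ x : Fin n → K, (∃ i, x i ≠ 0) ∧ ∑ i, algebraMap F K (a i) * x i ^ 2 = 0) →
      ∃ (m : ℕ), 0 < m ∧ ∃ y : Fin m → Fin n → F,
        (∃ p i, y p i ≠ 0) ∧ ∑ p, ∑ i, a i * y p i ^ 2 = 0)
    {d : F} (hd : d ≠ 0) (h : IsSumSq (algebraMap F K d)) : IsSumSq d := by
  obtain ⟨N, c, hc⟩ := h.exists_eq_sum_sq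
  -- the form `⟨-d, 1, …, 1⟩` is isotropic over `K`
  obtain ⟨m, -, y, ⟨p, i, hy⟩, hsum⟩ := htp (N + 1) (Fin.cons (-d) 1)
    (Fin.cases (neg_ne_zero.mpr hd) fun _ => one_ne_zero)
    ⟨Fin.cons 1 c, ⟨0, one_ne_zero⟩, by simp [Fin.sum_univ_succ, ← hc]⟩
  set S₀ := ∑ p, y p 0 ^ 2
  set S₁ := ∑ p, ∑ i : Fin N, y p i.succ ^ 2
  have hS₀ : IsSumSq S₀ := IsSumSq.sum_sq _ _
  have hS₁ : IsSumSq S₁ := IsSumSq.sum fun _ _ => IsSumSq.sum_sq _ _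
  have hS : S₁ = d * S₀ := by
    simp only [Fin.sum_univ_succ, Fin.cons_zero, Fin.cons_succ, Pi.one_apply, one_mul,
      sum_add_distrib, ← mul_sum] at hsum
    linear_combination hsum
  have hS₀ne : S₀ ≠ 0 := by
    intro h0
    have hy0 : ∑ p, ∑ i, y p i ^ 2 = 0 := by
      simp only [Fin.sum_univ_succ, sum_add_distrib]
      change S₀ + S₁ = 0
      rw [hS, h0, mul_zero, add_zero]
    have hrow := IsFormallyReal.eq_zero_of_sum_eq_zero (fun _ _ => IsSumSq.sum_sq _ _) hy0 p
      (mem_univ p)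
    exact hy <| (pow_eq_zero_iff two_ne_zero).mp <| IsFormallyReal.eq_zero_of_sum_eq_zero
      (fun _ _ => (IsSquare.sq _).isSumSq) hrow i (mem_univ i)
  have : d = S₁ * S₀ * (S₀⁻¹ * S₀⁻¹) := by rw [hS]; field_simp
  exact this ▸ (hS₁.mul hS₀).mul (.mul_self _)

theorem isSumSq_algebraMap_trace_mul_self {F K : Type*} [Field F] [Field K] [Algebra F K]
    [FiniteDimensional F K] [IsGalois F K] (x : K) :
    IsSumSq (algebraMap F K (Algebra.trace F K (x * x))) := by
  rw [trace_eq_sum_automorphisms]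
  simp only [map_mul]
  exact IsSumSq.sum_mul_self _ _

section WeakIsotropy

variable {F A : Type*} [CommSemiring F] [Semiring A] [Module F A] (σ : A →ₗ[F] A)

def IsWeaklyIsotropic : Prop :=
  ∃ (n : ℕ), 0 < n ∧ ∃ x : Fin n → A, (∀ m, x m ≠ 0) ∧ ∑ m, σ (x m) * x m = 0

variable {σ}

theorem IsWeaklyIsotropic.of_sum_eq_zero {ι : Type*} [Fintype ι] {x : ι → A}
    (hx : ∃ i, x i ≠ 0) (h : ∑ i, σ (x i) * x i = 0) : IsWeaklyIsotropic σ := by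
  classical
  set S := univ.filter (x · ≠ 0)
  obtain ⟨i, hi⟩ := hx
  refine ⟨S.card, card_pos.mpr ⟨i, by simpa [S]⟩, fun m => x (S.equivFin.symm m),
    fun m => (mem_filter.mp (S.equivFin.symm m).2).2, ?_⟩
  rw [Equiv.sum_comp S.equivFin.symm (fun j : S => σ (x j) * x j),
    sum_coe_sort S (fun j => σ (x j) * x j), ← h]
  exact sum_filter_of_ne fun j _ hj hxj => hj (by rw [hxj, mul_zero])

end WeakIsotropy

theorem IsWeaklyIsotropic.of_sum_smul {F A : Type*} [Field F] [Ring A] [Algebra F A]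
    {σ : A →ₗ[F] A} {ι : Type*} [Fintype ι] {d : ι → F} (hd : ∀ i, IsSumSq (d i)) {w : ι → A}
    (hw : ∃ i, d i ≠ 0 ∧ w i ≠ 0) (h : ∑ i, d i • (σ (w i) * w i) = 0) :
    IsWeaklyIsotropic σ := by
  choose k s hs using fun i => (hd i).exists_eq_sum_sq
  obtain ⟨i, hdi, hwi⟩ := hw
  obtain ⟨l, hl⟩ : ∃ l, s i l ≠ 0 := by
    by_contra! h0
    exact hdi (by simp [hs i, h0])
  refine of_sum_eq_zero (x := fun q : Σ i, Fin (k i) => s q.1 q.2 • w q.1)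
    ⟨⟨i, l⟩, smul_ne_zero hl hwi⟩ ?_
  rw [Fintype.sum_sigma, ← h]
  refine sum_congr rfl fun i _ => ?_
  rw [hs i, sum_smul]
  refine sum_congr rfl fun l _ => ?_
  rw [map_smul, smul_mul_smul_comm, sq]

theorem rid_lTensor_map_mul_self {F K A : Type*} [CommRing F] [Ring K] [Algebra F K] [Ring A]
    [Algebra F A] {ι : Type*} [Fintype ι] [DecidableEq ι] (τ : K →ₗ[F] F)
    (b : Module.Basis ι F K) (hb : ∀ i j, i ≠ j → τ (b i * b j) = 0) (σ : A →ₗ[F] A)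
    (z : A ⊗[F] K) :
    TensorProduct.rid F A (τ.lTensor A (map σ LinearMap.id z * z)) =
      ∑ i, τ (b i * b i) •
        (σ (equivFinsuppOfBasisRight b z i) * equivFinsuppOfBasisRight b z i) := by
  set c := equivFinsuppOfBasisRight b z
  have hz : z = ∑ i, c i ⊗ₜ b i := by
    conv_lhs => rw [← (equivFinsuppOfBasisRight b).symm_apply_apply z]
    rw [equivFinsuppOfBasisRight_symm_apply,
      Finsupp.sum_fintype _ _ fun i => zero_tmul _ (b i)]
  conv_lhs => rw [hz]
  simp only [map_sum, map_tmul, sum_mul_sum, Algebra.TensorProduct.tmul_mul_tmul,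
    LinearMap.lTensor_tmul, rid_tmul, LinearMap.id_coe, id_eq]
  refine sum_congr rfl fun i _ => sum_eq_single i (fun j _ hji => ?_) (by simp)
  rw [hb i j hji.symm, zero_smul]

theorem weakly_isotropic_descent_galois_two_extension_general
    (F K : Type*) [Field F] [Field K] [Algebra F K]
    [FiniteDimensional F K] [IsGalois F K]
    (hFR : ¬ IsSumSq (-1 : F))
    (htp : ∀ (n : ℕ) (a : Fin n → F), (∀ i, a i ≠ 0) →
      (∃ x : Fin n → K, (∃ i, x i ≠ 0) ∧ ∑ i, algebraMap F K (a i) * x i ^ 2 = 0) →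
      ∃ (m : ℕ), 0 < m ∧ ∃ y : Fin m → Fin n → F,
        (∃ p i, y p i ≠ 0) ∧ ∑ p, ∑ i, a i * y p i ^ 2 = 0)
    (A : Type*) [Ring A] [Algebra F A]
    (σ : A →ₗ[F] A)
    (hwiK : ∃ (n : ℕ), 0 < n ∧ ∃ z : Fin n → A ⊗[F] K,
      (∀ m, z m ≠ 0) ∧
        ∑ m, (TensorProduct.map σ (LinearMap.id : K →ₗ[F] K)) (z m) * z m = 0) :
    ∃ (n : ℕ), 0 < n ∧ ∃ x : Fin n → A,
      (∀ m, x m ≠ 0) ∧ ∑ m, σ (x m) * x m = 0 := by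
  have : IsSemireal F := isSemireal_iff_not_isSumSq_neg_one.mpr hFR
  have : Invertible (2 : F) := invertibleOfNonzero two_ne_zero
  obtain ⟨b, hb⟩ := LinearMap.BilinForm.exists_orthogonal_basis
    (LinearMap.BilinForm.isSymm_iff.mp (Algebra.traceForm_isSymm (R := F) (S := K)))
  have hd (j) : Algebra.trace F K (b j * b j) ≠ 0 :=
    LinearMap.BilinForm.iIsOrtho.not_isOrtho_basis_self_of_nondegenerate hb
      (traceForm_nondegenerate F K) j
  obtain ⟨n, hn, z, hz, hzsum⟩ := hwiK
  set c := fun q : Fin n × _ => equivFinsuppOfBasisRight b (z q.1) q.2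
  refine IsWeaklyIsotropic.of_sum_smul (d := fun q => Algebra.trace F K (b q.2 * b q.2)) (w := c)
    (fun q => isSumSq_of_isSumSq_algebraMap htp (hd q.2) (isSumSq_algebraMap_trace_mul_self _))
    ?_ ?_
  · obtain ⟨j, hj⟩ := Finsupp.ne_iff.mp ((equivFinsuppOfBasisRight b).map_ne_zero_iff.mpr
      (hz ⟨0, hn⟩))
    exact ⟨(⟨0, hn⟩, j), hd j, hj⟩
  · rw [Fintype.sum_prod_type]
    simp_rw [c, ← rid_lTensor_map_mul_self (Algebra.trace F K) b (fun i j h => hb h), ← map_sum,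
      hzsum, map_zero]

/-- Let `K/F` be a finite Galois extension of formally real fields of `2`-power degree
which is totally positive (in the quadratic-form characterization: every quadratic form
over `F` isotropic over `K` is weakly isotropic over `F`).  Let `A` be a central simple
`F`-algebra with an (orthogonal) involution `σ` of the first kind.  If `σ ⊗ 1` is weakly
isotropic on `A ⊗[F] K`, then `σ` is weakly isotropic over `F`. -/
theorem weakly_isotropic_descent_galois_two_extension
    (F K : Type*) [Field F] [Field K] [Algebra F K]
    [FiniteDimensional F K] [IsGalois F K]
    (hdeg : ∃ m : ℕ, Module.finrank F K = 2 ^ m)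
    (hFR : ¬ IsSumSq (-1 : F)) (hKR : ¬ IsSumSq (-1 : K))
    (htp : ∀ (n : ℕ) (a : Fin n → F), (∀ i, a i ≠ 0) →
      (∃ x : Fin n → K, (∃ i, x i ≠ 0) ∧ ∑ i, algebraMap F K (a i) * x i ^ 2 = 0) →
      ∃ (m : ℕ), 0 < m ∧ ∃ y : Fin m → Fin n → F,
        (∃ p i, y p i ≠ 0) ∧ ∑ p, ∑ i, a i * y p i ^ 2 = 0)
    (A : Type*) [Ring A] [Algebra F A]
    [Algebra.IsCentral F A] [IsSimpleRing A] [FiniteDimensional F A]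
    (σ : A →ₗ[F] A)
    (hanti : ∀ x y : A, σ (x * y) = σ y * σ x)
    (hinv : ∀ x : A, σ (σ x) = x)
    (hwiK : ∃ (n : ℕ), 0 < n ∧ ∃ z : Fin n → A ⊗[F] K,
      (∀ m, z m ≠ 0) ∧
        ∑ m, (TensorProduct.map σ (LinearMap.id : K →ₗ[F] K)) (z m) * z m = 0) :
    ∃ (n : ℕ), 0 < n ∧ ∃ x : Fin n → A,
      (∀ m, x m ≠ 0) ∧ ∑ m, σ (x m) * x m = 0 :=
  weakly_isotropic_descent_galois_two_extension_general F K hFR htp A σ hwiK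
end
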